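/- For the conjugate operator A on the binary tree, the matrix elements satisfy Σ_w |⟨δ_v, iA δ_w⟩| = O(|v|) uniformly in v; in particular Σ_w |⟨δ_v, iA δ_w⟩| ≤ C(|v|+1) for an absolute constant C. -/

import Mathlib

noncomputable section

/-- The sphere S_r of the binary tree, identified with {0,1}^r. -/
abbrev Sph (r : ℕ) := {l : List Bool // l.length = r}

/-- Index set for the Haar basis of ℓ²(S_r): `none` is the constant function
(level 0); `some p`, with p a binary word of length n−1 (1 ≤ n ≤ r), indexes
the level-n Haar function supported on the dyadic block of the 2^{r−n+1}
vertices having suffix p. -/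
abbrev HaarIdx (r : ℕ) := Option {p : List Bool // p.length < r}

/-- The level n(α) of a Haar basis function. -/
def haarLevel {r : ℕ} : HaarIdx r → ℕ
  | none => 0
  | some p => p.1.length + 1

/-- The Haar basis function ρ_α of ℓ²(S_r): the constant 2^{−r/2} at level 0,
and at level n the function supported on a dyadic block of size 2^{r−n+1}
taking the values ±2^{−(r−n+1)/2} on its two halves. -/
def haarFn {r : ℕ} (α : HaarIdx r) (v : Sph r) : ℂ :=
  match α with
  | none => ((Real.sqrt (2 ^ r))⁻¹ : ℝ)
  | some p =>
      if p.1 <:+ v.1 then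
        (if v.1.getD (r - p.1.length - 1) true then 1 else -1)
          * ((Real.sqrt (2 ^ (r - p.1.length)))⁻¹ : ℝ)
      else 0

/-- The Haar-level operator N = Σ_α n(α) ⟨ρ_α, ·⟩ ρ_α on ℓ²(S_r). -/
def NOp {r : ℕ} (φ : Sph r → ℂ) : Sph r → ℂ :=
  fun z => ∑' α : HaarIdx r,
    (haarLevel α : ℂ) * haarFn α z * ∑' w : Sph r, (starRingEnd ℂ) (haarFn α w) * φ w

/-- The standard basis vector δ_w. -/
def delta {r : ℕ} (w : Sph r) : Sph r → ℂ := fun u => if u = w then 1 else 0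

/-- The matrix element ⟨δ_z, N δ_w⟩. -/
def Nent {r : ℕ} (z w : Sph r) : ℂ := NOp (delta w) z

/-- The matrix element ⟨δ_v, N δ_w⟩ on ℓ²(V) of the binary tree V = List Bool
(N acts sphere-by-sphere; it vanishes unless |v| = |w|). -/
def NentTree (v w : List Bool) : ℂ :=
  if h : v.length = w.length then
    Nent (⟨v, rfl⟩ : Sph v.length) (⟨w, h.symm⟩ : Sph v.length)
  else 0

/-- The matrix elements ⟨δ_v, iA δ_w⟩ of the conjugate operator
iA = (R − N + 1/2)Π − Π*(R − N + 1/2): they vanish unless |w| = |v| ± 1, with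
⟨δ_v, iAδ_w⟩ = (|v|+1/2)δ(w→v) − Σ_{z:w→z}⟨δ_v, Nδ_z⟩ if |w| = |v| − 1, and
⟨δ_v, iAδ_w⟩ = −(|w|+1/2)δ(v→w) + Σ_{z:v→z}⟨δ_z, Nδ_w⟩ if |w| = |v| + 1
(w→v means w is the parent of v, i.e. v = b :: w). -/
def iAent (v w : List Bool) : ℂ :=
  if w.length + 1 = v.length then
    (((v.length : ℝ) + 1/2 : ℝ) : ℂ) * (if v.tail = w ∧ v ≠ [] then 1 else 0)
      - (NentTree v (true :: w) + NentTree v (false :: w))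
  else if v.length + 1 = w.length then
    -((((w.length : ℝ) + 1/2 : ℝ) : ℂ)) * (if w.tail = v ∧ w ≠ [] then 1 else 0)
      + (NentTree (true :: v) w + NentTree (false :: v) w)
  else 0

/-! Write `P_d` for the averaging operator on the sphere `S_r` over the first `d` letters, whose
kernel is `2⁻ᵈ [z.drop d = w.drop d]`. The span of the Haar functions of level at most `n` is the
range of `P_(r-n)`, so summation by parts turns `N = Σ n (P_(r-n) - P_(r-n+1))` into
`N = r - Σ_(d=1)^r P_d`. Each `P_d` is a Markov kernel, hence every row of `N` has `ℓ¹`-norm at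
most `2r`. Apart from the parent/child weights `|v| + O(1)`, an entry of `iA` in row `v` is a sum of
two entries of `N` on the spheres next to `v`, so the row sums of `|iA|` are `O(|v|)`. -/

open Finset

instance (r : ℕ) : Fintype (Sph r) :=
  inferInstanceAs (Fintype (List.Vector Bool r))

instance (α : Type*) [Finite α] (r : ℕ) : Fintype {p : List α // p.length < r} :=
  (List.finite_length_lt α r).fintype

lemma card_sph (r : ℕ) : Fintype.card (Sph r) = 2 ^ r := by
  rw [show Fintype.card (Sph r) = Fintype.card (List.Vector Bool r) from rfl, card_vector,
    Fintype.card_bool]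

lemma card_filter_drop_eq_le {r d : ℕ} (hd : d ≤ r) (t : List Bool) :
    #{w : Sph r | t = w.1.drop d} ≤ 2 ^ d := by
  rw [← card_sph d, ← Finset.card_univ]
  refine Finset.card_le_card_of_injOn (fun w => ⟨w.1.take d, by simp [w.2, hd]⟩)
    (fun _ _ => Finset.mem_univ _) ?_
  intro w₁ h₁ w₂ h₂ h
  simp only [Finset.coe_filter, Finset.mem_univ, true_and, Set.mem_ofPred_eq] at h₁ h₂
  rw [Subtype.ext_iff, ← List.take_append_drop d w₁.1, ← List.take_append_drop d w₂.1, ← h₁, ← h₂]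
  exact congrArg (· ++ t) (congrArg Subtype.val h)

lemma sum_length_lt_eq_sum_drop {α M : Type*} [Finite α] [AddCommMonoid M] {r : ℕ}
    {z : List α} (hz : z.length = r) (g : {p : List α // p.length < r} → M)
    (hg : ∀ p, ¬ p.1 <:+ z → g p = 0) :
    ∑ p, g p = ∑ j : Fin r, g ⟨z.drop (j + 1), by simp; omega⟩ := by
  refine (Fintype.sum_of_injective _ ?_ _ g ?_ fun _ => rfl).symm
  · intro i j h
    have := congrArg (fun p => p.1.length) h
    simp only [List.length_drop] at this
    omega
  · intro p hp
    refine hg p fun hs => hp ⟨⟨r - p.1.length - 1, by omega⟩, Subtype.ext ?_⟩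
    have hlen := p.2
    change z.drop (r - p.1.length - 1 + 1) = p.1
    rw [List.suffix_iff_eq_drop.mp hs, hz, List.length_drop, hz]
    congr 1
    omega

lemma sum_range_level_mul_telescope {K : Type*} [Field K] [CharZero K] (r : ℕ) (F : ℕ → K) :
    ∑ j ∈ range r, ((r : K) - j) * ((2 : K) ^ (j + 1))⁻¹ * (2 * F j - F (j + 1)) =
      r * F 0 - ∑ j ∈ range r, ((2 : K) ^ (j + 1))⁻¹ * F (j + 1) := by
  set a : ℕ → K := fun j => ((r : K) - j) * ((2 : K) ^ j)⁻¹ * F j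
  have hterm : ∀ j, ((r : K) - j) * ((2 : K) ^ (j + 1))⁻¹ * (2 * F j - F (j + 1)) =
      (a j - a (j + 1)) - ((2 : K) ^ (j + 1))⁻¹ * F (j + 1) := by
    intro j
    simp only [a]
    push_cast
    field_simp
    ring
  rw [Finset.sum_congr rfl fun j _ => hterm j, Finset.sum_sub_distrib, Finset.sum_range_sub']
  simp [a]

lemma Nent_eq_sum_haar {r : ℕ} (z w : Sph r) :
    Nent z w = ∑ α, (haarLevel α : ℂ) * haarFn α z * starRingEnd ℂ (haarFn α w) := by
  simp only [Nent, NOp, delta, mul_ite, mul_one, mul_zero, tsum_fintype,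
    Finset.sum_ite_eq', Finset.mem_univ, if_true]

lemma haarFn_some_drop {r j : ℕ} (hj : j < r) (z w : Sph r) :
    haarFn (some ⟨z.1.drop (j + 1), by simp; omega⟩) w =
      ((if z.1.drop (j + 1) = w.1.drop (j + 1) then
        (if w.1.getD j true then 1 else -1) * ((Real.sqrt (2 ^ (j + 1)))⁻¹ : ℝ)
      else 0 : ℂ)) := by
  have hr : r - (r - (j + 1)) = j + 1 := by omega
  simp only [haarFn, List.length_drop, z.2, hr, List.suffix_iff_eq_drop, w.2, Nat.add_sub_cancel]

lemma List.drop_eq_drop_iff_getD {α : Type*} {l l' : List α} {j : ℕ} (h : j < l.length)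
    (h' : j < l'.length) (d : α) :
    l.drop j = l'.drop j ↔ l.getD j d = l'.getD j d ∧ l.drop (j + 1) = l'.drop (j + 1) := by
  rw [List.drop_eq_getElem_cons h, List.drop_eq_getElem_cons h', List.cons.injEq,
    List.getD_eq_getElem _ _ h, List.getD_eq_getElem _ _ h']

lemma ofReal_inv_sqrt_mul_self (x : ℝ) (hx : 0 ≤ x) :
    ((Real.sqrt x)⁻¹ : ℝ) * ((Real.sqrt x)⁻¹ : ℝ) = ((x : ℂ))⁻¹ := by
  rw [← Complex.ofReal_mul, ← mul_inv, Real.mul_self_sqrt hx, Complex.ofReal_inv]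

lemma haar_term_drop {r j : ℕ} (hj : j < r) (z w : Sph r) :
    let p : HaarIdx r := some ⟨z.1.drop (j + 1), by simp; omega⟩
    (haarLevel p : ℂ) * haarFn p z * starRingEnd ℂ (haarFn p w) =
      ((r : ℂ) - j) * ((2 : ℂ) ^ (j + 1))⁻¹ *
        (2 * (if z.1.drop j = w.1.drop j then 1 else 0) -
          (if z.1.drop (j + 1) = w.1.drop (j + 1) then 1 else 0)) := by
  intro p
  have hlevel : (haarLevel p : ℂ) = (r : ℂ) - j := by
    simp only [p, haarLevel, List.length_drop, z.2]
    rw [show r - (j + 1) + 1 = r - j by omega, Nat.cast_sub hj.le]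
  have hamp := ofReal_inv_sqrt_mul_self (2 ^ (j + 1)) (by positivity)
  push_cast at hamp
  have hdrop := List.drop_eq_drop_iff_getD (l := z.1) (l' := w.1) (by rw [z.2]; exact hj)
    (by rw [w.2]; exact hj) true
  rw [hlevel, haarFn_some_drop hj, haarFn_some_drop hj, if_pos rfl]
  by_cases hF : z.1.drop (j + 1) = w.1.drop (j + 1)
  · simp only [hdrop, hF, and_true, if_true, map_mul, Complex.conj_ofReal]
    cases z.1.getD j true <;> cases w.1.getD j true <;>
      simp only [Bool.false_eq_true, Bool.true_eq_false, ↓reduceIte, Complex.ofReal_inv, neg_mul,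
        one_mul, mul_neg, map_neg, map_one, neg_neg, mul_one, mul_zero, zero_sub, neg_inj] <;>
      linear_combination ((r : ℂ) - j) * hamp
  · simp [hdrop, hF]

lemma Nent_eq {r : ℕ} (z w : Sph r) :
    Nent z w = r * (if z = w then 1 else 0) -
      ∑ j ∈ range r, ((2 : ℂ) ^ (j + 1))⁻¹ *
        (if z.1.drop (j + 1) = w.1.drop (j + 1) then 1 else 0) := by
  have hvanish : ∀ p : {p : List Bool // p.length < r}, ¬ p.1 <:+ z.1 →
      (haarLevel (some p) : ℂ) * haarFn (some p) z * starRingEnd ℂ (haarFn (some p) w) = 0 := by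
    intro p hp
    simp [haarFn, hp]
  rw [Nent_eq_sum_haar, Fintype.sum_option, sum_length_lt_eq_sum_drop z.2 _ hvanish]
  simp only [show haarLevel (none : HaarIdx r) = 0 from rfl, Nat.cast_zero, zero_mul, zero_add]
  rw [Fintype.sum_congr _ _ fun j => haar_term_drop j.2 z w,
    Fin.sum_univ_eq_sum_range (fun j => ((r : ℂ) - j) * ((2 : ℂ) ^ (j + 1))⁻¹ *
      (2 * (if z.1.drop j = w.1.drop j then 1 else 0) -
        (if z.1.drop (j + 1) = w.1.drop (j + 1) then 1 else 0))),
    sum_range_level_mul_telescope]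
  simp [Subtype.ext_iff]

lemma norm_Nent_le {r : ℕ} (z w : Sph r) :
    ‖Nent z w‖ ≤ r * (if z = w then 1 else 0) +
      ∑ j ∈ range r, ((2 : ℝ) ^ (j + 1))⁻¹ *
        (if z.1.drop (j + 1) = w.1.drop (j + 1) then 1 else 0) := by
  rw [Nent_eq]
  refine (norm_sub_le _ _).trans
    (add_le_add (le_of_eq ?_) ((norm_sum_le _ _).trans (le_of_eq ?_)))
  · split_ifs <;> simp
  · refine Finset.sum_congr rfl fun j _ => ?_
    split_ifs <;> simp

lemma sum_norm_Nent_le {r : ℕ} (z : Sph r) : ∑ w, ‖Nent z w‖ ≤ 2 * r := by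
  have hcount : ∀ j ∈ range r, ∑ w : Sph r, ((2 : ℝ) ^ (j + 1))⁻¹ *
      (if z.1.drop (j + 1) = w.1.drop (j + 1) then 1 else 0) ≤ 1 := by
    intro j hj
    rw [← Finset.mul_sum, Finset.sum_boole, inv_mul_le_one₀ (by positivity)]
    exact_mod_cast card_filter_drop_eq_le (Finset.mem_range.mp hj) _
  calc ∑ w, ‖Nent z w‖
      ≤ ∑ w, (r * (if z = w then 1 else 0) + ∑ j ∈ range r, ((2 : ℝ) ^ (j + 1))⁻¹ *
          (if z.1.drop (j + 1) = w.1.drop (j + 1) then 1 else 0)) :=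
        Finset.sum_le_sum fun w _ => norm_Nent_le z w
    _ = r + ∑ j ∈ range r, ∑ w : Sph r, ((2 : ℝ) ^ (j + 1))⁻¹ *
          (if z.1.drop (j + 1) = w.1.drop (j + 1) then 1 else 0) := by
        rw [Finset.sum_add_distrib, Finset.sum_comm, ← Finset.mul_sum]
        simp
    _ ≤ r + ∑ _j ∈ range r, 1 := by gcongr with j hj; exact hcount j hj
    _ = 2 * r := by rw [Finset.sum_const, Finset.card_range, nsmul_one]; ring

lemma NentTree_val (v : List Bool) (w : Sph v.length) : NentTree v w.1 = Nent ⟨v, rfl⟩ w := by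
  simp [NentTree, w.2]

lemma NentTree_eq_zero_of_notMem_range {v u : List Bool}
    (hu : u ∉ Set.range (Subtype.val : Sph v.length → List Bool)) : NentTree v u = 0 :=
  dif_neg fun h => hu ⟨⟨u, h.symm⟩, rfl⟩

lemma summable_norm_NentTree (v : List Bool) : Summable fun u => ‖NentTree v u‖ :=
  (Subtype.val_injective.summable_iff fun _ hu => by
    rw [NentTree_eq_zero_of_notMem_range hu, norm_zero]).mp Summable.of_finite

lemma tsum_norm_NentTree_le (v : List Bool) : ∑' u, ‖NentTree v u‖ ≤ 2 * v.length := by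
  rw [← Subtype.val_injective.tsum_eq (Function.support_subset_iff'.mpr fun _ hu => by
    rw [NentTree_eq_zero_of_notMem_range hu, norm_zero]), tsum_fintype]
  simpa only [NentTree_val] using sum_norm_Nent_le _


lemma norm_parent_weight_le (v w : List Bool) :
    ‖(((v.length : ℝ) + 1 / 2 : ℝ) : ℂ) * (if v.tail = w ∧ v ≠ [] then 1 else 0)‖ ≤
      (v.length + 3 / 2) * (if w = v.tail then 1 else 0) := by
  by_cases h : v.tail = w ∧ v ≠ []
  · rw [if_pos h, if_pos h.1.symm, mul_one, mul_one, Complex.norm_real,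
      Real.norm_of_nonneg (by positivity)]
    linarith
  · rw [if_neg h, mul_zero, norm_zero]
    split_ifs <;> positivity

lemma norm_child_weight_le {v w : List Bool} (hvw : v.length + 1 = w.length) :
    ‖-(((w.length : ℝ) + 1 / 2 : ℝ) : ℂ) * (if w.tail = v ∧ w ≠ [] then 1 else 0)‖ ≤
      (v.length + 3 / 2) *
        ((if w = true :: v then 1 else 0) + (if w = false :: v then 1 else 0)) := by
  by_cases h : w.tail = v ∧ w ≠ []
  · obtain ⟨b, rfl⟩ : ∃ b, w = b :: v := by
      cases w with
      | nil => exact absurd rfl h.2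
      | cons b t => exact ⟨b, by rw [← h.1, List.tail_cons]⟩
    rw [if_pos h, mul_one, norm_neg, Complex.norm_real, Real.norm_of_nonneg (by positivity)]
    cases b <;> simp only [List.length_cons, Nat.cast_succ, List.cons.injEq, Bool.false_eq_true,
      Bool.true_eq_false, and_true, if_true, if_false] <;> linarith
  · rw [if_neg h, mul_zero, norm_zero]
    split_ifs <;> positivity

def iAMajorant (v w : List Bool) : ℝ :=
  (v.length + 3 / 2) * (if w = v.tail then 1 else 0) +
    (v.length + 3 / 2) * ((if w = true :: v then 1 else 0) + (if w = false :: v then 1 else 0)) +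
    (‖NentTree v (true :: w)‖ + ‖NentTree v (false :: w)‖) +
    (‖NentTree (true :: v) w‖ + ‖NentTree (false :: v) w‖)

lemma norm_iAent_le (v w : List Bool) : ‖iAent v w‖ ≤ iAMajorant v w := by
  have hind : ∀ (P : Prop) [Decidable P], (0 : ℝ) ≤ if P then 1 else 0 := fun P _ => by
    split_ifs <;> norm_num
  have hparent : 0 ≤ (v.length + 3 / 2 : ℝ) * (if w = v.tail then 1 else 0) :=
    mul_nonneg (by positivity) (hind _)
  have hchildren : 0 ≤ (v.length + 3 / 2 : ℝ) *
      ((if w = true :: v then 1 else 0) + (if w = false :: v then 1 else 0)) :=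
    mul_nonneg (by positivity) (add_nonneg (hind _) (hind _))
  have hN₁ := norm_nonneg (NentTree v (true :: w))
  have hN₂ := norm_nonneg (NentTree v (false :: w))
  have hN₃ := norm_nonneg (NentTree (true :: v) w)
  have hN₄ := norm_nonneg (NentTree (false :: v) w)
  rw [iAent, iAMajorant]
  by_cases hdown : w.length + 1 = v.length
  · rw [if_pos hdown]
    calc _ ≤ _ + (_ + _) := (norm_sub_le _ _).trans (add_le_add le_rfl (norm_add_le _ _))
      _ ≤ _ := by linarith [norm_parent_weight_le v w]
  by_cases hup : v.length + 1 = w.length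
  · rw [if_neg hdown, if_pos hup]
    calc _ ≤ _ + (_ + _) := (norm_add_le _ _).trans (add_le_add le_rfl (norm_add_le _ _))
      _ ≤ _ := by linarith [norm_child_weight_le hup]
  rw [if_neg hdown, if_neg hup, norm_zero]
  positivity

lemma summable_norm_NentTree_cons (v : List Bool) (b : Bool) :
    Summable fun w => ‖NentTree v (b :: w)‖ :=
  (summable_norm_NentTree v).comp_injective List.cons_injective

lemma tsum_norm_NentTree_cons_le (v : List Bool) (b : Bool) :
    ∑' w, ‖NentTree v (b :: w)‖ ≤ 2 * v.length :=
  (tsum_comp_le_tsum_of_inj (summable_norm_NentTree v) (fun _ => norm_nonneg _)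
    List.cons_injective).trans (tsum_norm_NentTree_le v)

lemma hasSum_iAMajorant_weights (v : List Bool) :
    HasSum (fun w => (v.length + 3 / 2 : ℝ) * (if w = v.tail then 1 else 0) +
      (v.length + 3 / 2) * ((if w = true :: v then 1 else 0) + (if w = false :: v then 1 else 0)))
      ((v.length + 3 / 2) * 1 + (v.length + 3 / 2) * (1 + 1)) :=
  ((hasSum_ite_eq _ 1).mul_left _).add (((hasSum_ite_eq _ 1).add (hasSum_ite_eq _ 1)).mul_left _)

lemma summable_iAMajorant (v : List Bool) : Summable (iAMajorant v) :=
  (((hasSum_iAMajorant_weights v).summable.add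
    ((summable_norm_NentTree_cons v true).add (summable_norm_NentTree_cons v false))).add
    ((summable_norm_NentTree (true :: v)).add (summable_norm_NentTree (false :: v))))

lemma tsum_iAMajorant_le (v : List Bool) : ∑' w, iAMajorant v w ≤ 12 * (v.length + 1) := by
  have hweights := hasSum_iAMajorant_weights v
  have hparents := (summable_norm_NentTree_cons v true).add (summable_norm_NentTree_cons v false)
  have hchildren := (summable_norm_NentTree (true :: v)).add (summable_norm_NentTree (false :: v))
  unfold iAMajorant
  rw [(hweights.summable.add hparents).tsum_add hchildren, hweights.summable.tsum_add hparents,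
    (summable_norm_NentTree_cons v true).tsum_add (summable_norm_NentTree_cons v false),
    (summable_norm_NentTree (true :: v)).tsum_add (summable_norm_NentTree (false :: v)),
    hweights.tsum_eq]
  have hchild (b : Bool) : ∑' w, ‖NentTree (b :: v) w‖ ≤ 2 * (v.length + 1) := by
    simpa using tsum_norm_NentTree_le (b :: v)
  linarith [tsum_norm_NentTree_cons_le v true, tsum_norm_NentTree_cons_le v false,
    hchild true, hchild false]

/-- Σ_w |⟨δ_v, iA δ_w⟩| = O(|v|) uniformly in v; in particular
there is an absolute constant C with Σ_w |⟨δ_v, iA δ_w⟩| ≤ C(|v| + 1). -/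
theorem iA_row_sum_bound :
    ∃ C : ℝ, 0 < C ∧ ∀ v : List Bool,
      ∑' w : List Bool, ‖iAent v w‖ ≤ C * ((v.length : ℝ) + 1) := by
  refine ⟨12, by norm_num, fun v => ?_⟩
  have hsum := summable_iAMajorant v
  exact ((hsum.of_nonneg_of_le (fun _ => norm_nonneg _) (norm_iAent_le v)).tsum_le_tsum
    (norm_iAent_le v) hsum).trans (tsum_iAMajorant_le v)

end
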